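/- Let Γ ⊂ ℂⁿ be a compact set homeomorphic to a circle such that polynomials are dense in C(Γ, ℂ). Then there exist polynomials P₊ and P₋, each nonvanishing on Γ, such that the winding number of P₊ along Γ is +1 and the winding number of P₋ along Γ is −1. -/

import Mathlib

/-!
The loop `t ↦ exp (2πint)` takes the same value at `0` and `1`, so it factors through `γ`
as a continuous function on `Γ` (the parametrisation `[0,1] → Γ` is a closed surjection,
hence a quotient map). A polynomial `P` within distance `1` of it on `Γ` cannot vanish there,
and `P ∘ γ = q · exp (2πint)` with `Re q > 0`; then `2πnt + arg (q t)` is a continuous argument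
of `P ∘ γ` increasing by `2πn`. Taking `n = ±1` gives the two polynomials.
-/

open Complex

/-- A continuous loop `γ : [0,1] → ℂ \ {0}` has winding number `n` around `0`
if a continuous argument function along it changes by `2πn`. -/
def HasWindingNumber (γ : ℝ → ℂ) (n : ℤ) : Prop :=
  ∃ θ : ℝ → ℝ, ContinuousOn θ (Set.Icc 0 1) ∧
    (∀ t ∈ Set.Icc (0:ℝ) 1, γ t = (‖γ t‖ : ℂ) * Complex.exp (θ t * I)) ∧
    θ 1 - θ 0 = 2 * Real.pi * n

open Set

noncomputable def expLoop (n : ℤ) (t : ℝ) : ℂ := exp ((2 * Real.pi * n * t : ℝ) * I)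

lemma continuous_expLoop (n : ℤ) : Continuous (expLoop n) := by
  unfold expLoop; fun_prop

@[simp] lemma norm_expLoop (n : ℤ) (t : ℝ) : ‖expLoop n t‖ = 1 :=
  norm_exp_ofReal_mul_I _

@[simp] lemma expLoop_zero_right (n : ℤ) : expLoop n 0 = 1 := by
  simp [expLoop]

@[simp] lemma expLoop_one_right (n : ℤ) : expLoop n 1 = 1 := by
  simpa [expLoop, mul_comm, mul_assoc, mul_left_comm] using exp_int_mul_two_pi_mul_I n

lemma expLoop_neg_mul_self (n : ℤ) (t : ℝ) : expLoop (-n) t * expLoop n t = 1 := by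
  rw [expLoop, expLoop, ← exp_add, ← exp_zero]; push_cast; ring_nf

lemma hasWindingNumber_mul_expLoop {q : ℝ → ℂ} (hq : ContinuousOn q (Icc 0 1))
    (hre : ∀ t ∈ Icc (0:ℝ) 1, 0 < (q t).re) (hq01 : q 0 = q 1) (n : ℤ) :
    HasWindingNumber (fun t => q t * expLoop n t) n := by
  refine ⟨fun t => 2 * Real.pi * n * t + arg (q t), ?_, fun t _ => ?_, ?_⟩
  · refine (continuous_const.mul continuous_id).continuousOn.add fun t ht => ?_
    exact (continuousAt_arg (Or.inl (hre t ht))).comp_continuousWithinAt (hq t ht)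
  · dsimp only
    conv_lhs => rw [← norm_mul_exp_arg_mul_I (q t)]
    rw [norm_mul, norm_expLoop, mul_one, expLoop, mul_assoc, ← exp_add]
    push_cast; ring_nf
  · simp only [mul_one, mul_zero, zero_add, hq01]; ring

lemma hasWindingNumber_of_norm_sub_expLoop_lt_one {g : ℝ → ℂ} {n : ℤ}
    (hg : ContinuousOn g (Icc 0 1)) (hg01 : g 0 = g 1)
    (happ : ∀ t ∈ Icc (0:ℝ) 1, ‖g t - expLoop n t‖ < 1) :
    HasWindingNumber g n := by
  set q : ℝ → ℂ := fun t => g t * expLoop (-n) t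
  have hgq : g = fun t => q t * expLoop n t := by
    funext t; simp only [q, mul_assoc, expLoop_neg_mul_self, mul_one]
  have hre : ∀ t ∈ Icc (0:ℝ) 1, 0 < (q t).re := by
    intro t ht
    have hdist : ‖q t - 1‖ < 1 := calc
      ‖q t - 1‖ = ‖(g t - expLoop n t) * expLoop (-n) t‖ := by
        rw [sub_mul, mul_comm (expLoop n t), expLoop_neg_mul_self]
      _ < 1 := by simpa using happ t ht
    have habs := (abs_re_le_norm (q t - 1)).trans_lt hdist
    rw [sub_re, one_re] at habs
    linarith [(abs_lt.mp habs).1]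
  rw [hgq]
  refine hasWindingNumber_mul_expLoop (hg.mul (continuous_expLoop _).continuousOn) hre ?_ n
  simp [hg01]

lemma IsCompact.exists_continuousOn_comp_eq {α X Y : Type*} [TopologicalSpace α] [Nonempty α]
    [TopologicalSpace X] [T2Space X] [TopologicalSpace Y] {K : Set α} (hK : IsCompact K)
    {γ : α → X} (hγ : ContinuousOn γ K) {f : α → Y} (hf : ContinuousOn f K)
    (hfib : ∀ s ∈ K, ∀ t ∈ K, γ s = γ t → f s = f t) :
    ∃ F : X → Y, ContinuousOn F (γ '' K) ∧ ∀ t ∈ K, F (γ t) = f t := by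
  have hFγ : ∀ t ∈ K, f (Function.invFunOn γ K (γ t)) = f t := fun t ht =>
    hfib _ (Function.invFunOn_apply_mem ht) _ ht (Function.invFunOn_apply_eq ht)
  refine ⟨fun x => f (Function.invFunOn γ K x), ?_, hFγ⟩
  have : CompactSpace K := isCompact_iff_compactSpace.mp hK
  set g := (mapsTo_image γ K).restrict
  have hg : Continuous g := hγ.mapsToRestrict _
  have hquot : Topology.IsQuotientMap g :=
    hg.isClosedMap.isQuotientMap hg (surjective_mapsTo_image_restrict γ K)
  rw [continuousOn_iff_continuous_domRestrict, hquot.continuous_iff]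
  convert hf.domRestrict using 1
  funext t
  exact hFγ t t.2

lemma apply_eq_of_injOn_Ico {X Y : Type*} {γ : ℝ → X} (hloop : γ 0 = γ 1)
    (hinj : InjOn γ (Ico 0 1)) {f : ℝ → Y} (hf01 : f 0 = f 1) :
    ∀ s ∈ Icc (0:ℝ) 1, ∀ t ∈ Icc (0:ℝ) 1, γ s = γ t → f s = f t := by
  let r : ℝ → ℝ := fun t => if t = 1 then 0 else t
  have hr : ∀ t ∈ Icc (0:ℝ) 1, r t ∈ Ico 0 1 ∧ γ (r t) = γ t ∧ f (r t) = f t := by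
    intro t ht
    by_cases h : t = 1
    · simp [r, h, hloop, hf01]
    · simp [r, h, ht.1, lt_of_le_of_ne ht.2 h]
  intro s hs t ht hst
  obtain ⟨hrs, hγs, hfs⟩ := hr s hs
  obtain ⟨hrt, hγt, hft⟩ := hr t ht
  rw [← hfs, ← hft, hinj hrs hrt (by rw [hγs, hγt, hst])]

lemma exists_mvPolynomial_hasWindingNumber {N : ℕ} (n : ℤ) {γ : ℝ → (Fin N → ℂ)}
    (hγ : ContinuousOn γ (Icc 0 1)) (hloop : γ 0 = γ 1) (hinj : InjOn γ (Ico 0 1))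
    (hdense : ∀ f : (Fin N → ℂ) → ℂ, ContinuousOn f (γ '' Icc 0 1) → ∀ ε : ℝ, 0 < ε →
      ∃ P : MvPolynomial (Fin N) ℂ, ∀ z ∈ γ '' Icc 0 1, ‖f z - MvPolynomial.eval z P‖ < ε) :
    ∃ P : MvPolynomial (Fin N) ℂ, (∀ z ∈ γ '' Icc 0 1, MvPolynomial.eval z P ≠ 0) ∧
      HasWindingNumber (fun t => MvPolynomial.eval (γ t) P) n := by
  obtain ⟨F, hFc, hFγ⟩ := isCompact_Icc.exists_continuousOn_comp_eq hγ
    (continuous_expLoop n).continuousOn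
    (apply_eq_of_injOn_Ico hloop hinj (by simp))
  obtain ⟨P, hP⟩ := hdense F hFc 1 one_pos
  have happ : ∀ t ∈ Icc (0:ℝ) 1, ‖MvPolynomial.eval (γ t) P - expLoop n t‖ < 1 := by
    intro t ht
    simpa [norm_sub_rev, hFγ t ht] using hP (γ t) (mem_image_of_mem γ ht)
  refine ⟨P, ?_, hasWindingNumber_of_norm_sub_expLoop_lt_one
    ((MvPolynomial.continuous_eval P).comp_continuousOn hγ) (by rw [hloop]) happ⟩
  rintro _ ⟨t, ht, rfl⟩ h0
  simpa [h0] using happ t ht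

/-- If `Γ ⊂ ℂⁿ` is a simple closed curve on which polynomials are dense in the
continuous functions, then there are polynomials `P₊`, `P₋` nonvanishing on `Γ`
with winding numbers `+1` and `-1` along `Γ`. -/
theorem exists_polynomials_winding_pm_one
    {N : ℕ} (γ : ℝ → (Fin N → ℂ))
    (hγ : ContinuousOn γ (Set.Icc 0 1))
    (hloop : γ 0 = γ 1)
    (hinj : Set.InjOn γ (Set.Ico 0 1))
    (Γ : Set (Fin N → ℂ)) (hΓ : Γ = γ '' Set.Icc 0 1)
    (hdense : ∀ f : (Fin N → ℂ) → ℂ, ContinuousOn f Γ → ∀ ε : ℝ, 0 < ε →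
      ∃ P : MvPolynomial (Fin N) ℂ, ∀ z ∈ Γ, ‖f z - MvPolynomial.eval z P‖ < ε) :
    ∃ Pp Pm : MvPolynomial (Fin N) ℂ,
      (∀ z ∈ Γ, MvPolynomial.eval z Pp ≠ 0) ∧
      (∀ z ∈ Γ, MvPolynomial.eval z Pm ≠ 0) ∧
      HasWindingNumber (fun t => MvPolynomial.eval (γ t) Pp) 1 ∧
      HasWindingNumber (fun t => MvPolynomial.eval (γ t) Pm) (-1) := by
  subst hΓ
  obtain ⟨Pp, hPp, hwp⟩ := exists_mvPolynomial_hasWindingNumber 1 hγ hloop hinj hdense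
  obtain ⟨Pm, hPm, hwm⟩ := exists_mvPolynomial_hasWindingNumber (-1) hγ hloop hinj hdense
  exact ⟨Pp, Pm, hPp, hPm, hwp, hwm⟩
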